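/- Fisher identity (discrete case): For a joint probability mass function p on a finite type X × Y depending smoothly on a real parameter t, with p(x,t) := ∑_y p(x,y,t) > 0 for all x, the derivative of log p(x,t) with respect to t equals the conditional expectation over y ~ p(y|x,t) of the derivative of log p(x|y,t) with respect to t, where p(y,t) := ∑_x p(x,y,t) is assumed independent of t. -/

import Mathlib

/-! The logarithmic derivative of a finite sum of nonvanishing functions is the average of their
logarithmic derivatives, weighted by their shares of the sum. Applied to `p(x,t) = ∑ y, p(x,y,t)`
this gives `∑ y, p(y|x,t) · d/dt log p(x,y,t)`, and since `p(y,t)` does not move,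
`d/dt log p(x|y,t) = d/dt log p(x,y,t)`. -/

open Finset

section LogDeriv

variable {𝕜 𝕜' : Type*} [NontriviallyNormedField 𝕜] [NontriviallyNormedField 𝕜']
  [NormedAlgebra 𝕜 𝕜']

theorem logDeriv_sum {ι : Type*} {s : Finset ι} {f : ι → 𝕜 → 𝕜'} {x : 𝕜}
    (hf : ∀ i ∈ s, f i x ≠ 0) (hd : ∀ i ∈ s, DifferentiableAt 𝕜 (f i) x) :
    logDeriv (∑ i ∈ s, f i ·) x = ∑ i ∈ s, (f i x / ∑ j ∈ s, f j x) * logDeriv (f i) x := by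
  rw [logDeriv_apply, deriv_fun_sum hd, sum_div]
  refine sum_congr rfl fun i hi => ?_
  rw [logDeriv_apply]
  field_simp [hf i hi]

theorem logDeriv_div_of_deriv_eq_zero {f g : 𝕜 → 𝕜'} {x : 𝕜} (hf : f x ≠ 0) (hg : g x ≠ 0)
    (hdf : DifferentiableAt 𝕜 f x) (hdg : DifferentiableAt 𝕜 g x) (hg' : deriv g x = 0) :
    logDeriv (fun z => f z / g z) x = logDeriv f x := by
  rw [logDeriv_div x hf hg hdf hdg, logDeriv_apply g, hg', zero_div, sub_zero]

end LogDeriv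

theorem fisher_identity_discrete_general
    {X Y : Type*} [Fintype X] [Fintype Y]
    (p : X → Y → ℝ → ℝ)
    (hpos : ∀ x y t, 0 < p x y t)
    (hdiff : ∀ x y, Differentiable ℝ (p x y))
    (hmarg : ∀ y t, deriv (fun s => ∑ x, p x y s) t = 0)
    (x : X) (t : ℝ) :
    deriv (fun s => Real.log (∑ y, p x y s)) t =
      ∑ y, (p x y t / ∑ y', p x y' t) *
        deriv (fun s => Real.log (p x y s / ∑ x', p x' y s)) t := by
  rcases isEmpty_or_nonempty Y with hY | hY
  · simp
  have hmarg_pos : ∀ y, 0 < ∑ x', p x' y t := fun y =>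
    sum_pos (fun x' _ => hpos x' y t) ⟨x, mem_univ x⟩
  have hcond : ∀ y, deriv (fun s => Real.log (p x y s / ∑ x', p x' y s)) t =
      logDeriv (p x y) t := fun y => by
    have hdmarg : DifferentiableAt ℝ (fun s => ∑ x', p x' y s) t := by fun_prop
    have hdcond : DifferentiableAt ℝ (fun s => p x y s / ∑ x', p x' y s) t :=
      ((hdiff x y) t).div hdmarg (hmarg_pos y).ne'
    rw [deriv.log hdcond (div_pos (hpos x y t) (hmarg_pos y)).ne', ← logDeriv_apply,
      logDeriv_div_of_deriv_eq_zero (hpos x y t).ne' (hmarg_pos y).ne' ((hdiff x y) t) hdmarg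
        (hmarg y t)]
  rw [deriv.log (by fun_prop) (sum_pos (fun y _ => hpos x y t) univ_nonempty).ne',
    ← logDeriv_apply, logDeriv_sum (fun y _ => (hpos x y t).ne') (fun y _ => (hdiff x y) t)]
  simp only [hcond]

/-- Fisher identity (discrete case). -/
theorem fisher_identity_discrete
    {X Y : Type*} [Fintype X] [Fintype Y]
    (p : X → Y → ℝ → ℝ)
    (hpos : ∀ x y t, 0 < p x y t)
    (hsum : ∀ t, ∑ x, ∑ y, p x y t = 1)
    (hdiff : ∀ x y, Differentiable ℝ (p x y))
    (hmarg : ∀ y t, deriv (fun s => ∑ x, p x y s) t = 0)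
    (x : X) (t : ℝ) :
    deriv (fun s => Real.log (∑ y, p x y s)) t =
      ∑ y, (p x y t / ∑ y', p x y' t) *
        deriv (fun s => Real.log (p x y s / ∑ x', p x' y s)) t :=
  fisher_identity_discrete_general p hpos hdiff hmarg x t
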